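/- If f is a 2π-periodic continuously differentiable function whose derivative has concave modulus of continuity ≤ ω, then the conjugate function f̃ exists, is continuously differentiable, and (f̃)' = (f')̃, i.e., conjugation commutes with differentiation on W^r H_ω for r ≥ 1. -/

import Mathlib

open MeasureTheory Real Filter Set

noncomputable section

def IsConcaveModulus (ω : ℝ → ℝ) : Prop :=
  Continuous ω ∧ MonotoneOn ω (Ici 0) ∧ ω 0 = 0 ∧
    (∀ s t : ℝ, 0 ≤ s → 0 ≤ t → ω (s + t) ≤ ω s + ω t) ∧
    (∀ t : ℝ, 0 ≤ t → 0 ≤ ω t) ∧ ConcaveOn ℝ (Ici 0) ω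

def DiniCondition (ω : ℝ → ℝ) : Prop :=
  ∃ ε > 0, IntegrableOn (fun t => ω t / t) (Ioo 0 ε)

def MemH (ω f : ℝ → ℝ) : Prop :=
  Function.Periodic f (2 * π) ∧ ∀ x y : ℝ, |f x - f y| ≤ ω |x - y|

def ConjAt (f : ℝ → ℝ) (x L : ℝ) : Prop :=
  Tendsto (fun δ : ℝ =>
      -(1 / π) * ∫ t in {t : ℝ | δ ≤ |t - x| ∧ |t - x| ≤ π},
        f t / (2 * Real.tan ((t - x) / 2)))
    (nhdsWithin 0 (Ioi 0)) (nhds L)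

def ConjFn (f g : ℝ → ℝ) : Prop := ∀ x : ℝ, ConjAt f x (g x)

def MemWrH (r : ℕ) (ω f : ℝ → ℝ) : Prop :=
  Function.Periodic f (2 * π) ∧ ContDiff ℝ r f ∧
    ∀ x y : ℝ, |iteratedDeriv r f x - iteratedDeriv r f y| ≤ ω |x - y|

open scoped Topology

/-! Since the kernel `1 / (2 tan (u / 2))` is odd, subtracting `f x` does not change the
truncated integrals, so `f̃ x = -(1/π) ∫_{-π}^{π} (f (x + u) - f x) / (2 tan (u / 2)) du`, now
absolutely convergent. The kernel is bounded by `1 / |u|`, so the same integrand for `f'` is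
dominated, uniformly in `x`, by `ω |u| / |u|`, which is integrable by the Dini condition.
Differentiation under the integral sign gives `(f̃)' = (f')̃`, and dominated convergence gives
its continuity. -/

lemma setIntegral_eq_zero_of_odd {E : Type*} [NormedAddCommGroup E] [NormedSpace ℝ E]
    {K : ℝ → E} {s : Set ℝ} (hs : Neg.neg ⁻¹' s = s) (hK : ∀ u, K (-u) = -K u) :
    ∫ u in s, K u = 0 := by
  have h := (Measure.measurePreserving_neg (volume : Measure ℝ)).setIntegral_preimage_emb
    (MeasurableEquiv.neg ℝ).measurableEmbedding K s
  simp only [hs, hK, integral_neg] at h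
  have h2 : (2 : ℝ) • ∫ u in s, K u = 0 := by
    rw [two_smul]; nth_rewrite 1 [← h]; exact neg_add_cancel _
  exact (smul_eq_zero.1 h2).resolve_left two_ne_zero

lemma tendsto_setIntegral_inter_abs_ge {E : Type*} [NormedAddCommGroup E] [NormedSpace ℝ E]
    {G : ℝ → E} {s : Set ℝ} (hG : IntegrableOn G s) :
    Tendsto (fun δ => ∫ u in s ∩ {u | δ ≤ |u|}, G u) (𝓝[>] 0) (𝓝 (∫ u in s, G u)) := by
  have hmeas : ∀ δ : ℝ, MeasurableSet {u : ℝ | δ ≤ |u|} := fun δ =>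
    measurableSet_le measurable_const measurable_abs
  simp_rw [← setIntegral_indicator (hmeas _)]
  refine tendsto_integral_filter_of_dominated_convergence (fun u => ‖G u‖)
    (Eventually.of_forall fun δ => hG.aestronglyMeasurable.indicator (hmeas δ))
    (Eventually.of_forall fun δ => Eventually.of_forall fun u =>
      norm_indicator_le_norm_self _ _) hG.norm ?_
  filter_upwards [ae_restrict_of_ae (Measure.ae_ne volume 0)] with u hu
  refine tendsto_const_nhds.congr' ?_
  filter_upwards [nhdsWithin_le_nhds (eventually_lt_nhds (abs_pos.2 hu))] with δ hδ
  exact (indicator_of_mem (show u ∈ {u : ℝ | δ ≤ |u|} from hδ.le) G).symm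

def conjKernel (u : ℝ) : ℝ := 1 / (2 * tan (u / 2))

lemma conjKernel_neg (u : ℝ) : conjKernel (-u) = -conjKernel u := by
  simp [conjKernel, neg_div, tan_neg]

lemma measurable_conjKernel : Measurable conjKernel := by
  have htan : tan = fun x => sin x / cos x := funext tan_eq_sin_div_cos
  rw [show conjKernel = fun u => 1 / (2 * tan (u / 2)) from rfl, htan]
  fun_prop

-- No `u ≠ 0` needed: `conjKernel 0 = 1 / 0 = 0 = |0|⁻¹`.
lemma abs_conjKernel_le {u : ℝ} (hu : |u| ≤ π) : |conjKernel u| ≤ |u|⁻¹ := by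
  wlog hpos : 0 < u generalizing u
  · rcases (not_lt.1 hpos).lt_or_eq with hneg | rfl
    · simpa [conjKernel_neg] using this (u := -u) (by simpa using hu) (by linarith)
    · simp [conjKernel]
  rw [abs_of_pos hpos] at hu ⊢
  rcases hu.lt_or_eq with hlt | rfl
  · have htan : u / 2 < tan (u / 2) := lt_tan (by linarith) (by linarith)
    rw [conjKernel, abs_of_pos (one_div_pos.2 (by linarith)), one_div]
    exact inv_anti₀ hpos (by linarith)
  · simp [conjKernel, tan_pi_div_two, pi_pos.le]

lemma integrableOn_conjKernel_inter_abs_ge {δ : ℝ} (hδ : 0 < δ) :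
    IntegrableOn conjKernel (Icc (-π) π ∩ {u | δ ≤ |u|}) := by
  refine IntegrableOn.of_bound (measure_inter_lt_top_of_left_ne_top (by simp))
    measurable_conjKernel.aestronglyMeasurable δ⁻¹ ?_
  refine ae_restrict_of_forall_mem
    (measurableSet_Icc.inter (measurableSet_le measurable_const measurable_abs)) ?_
  rintro u ⟨hu, hδu⟩
  exact (abs_conjKernel_le (abs_le.2 hu)).trans (inv_anti₀ hδ hδu)

lemma integral_conjKernel_inter_abs_ge (δ : ℝ) :
    ∫ u in Icc (-π) π ∩ {u | δ ≤ |u|}, conjKernel u = 0 :=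
  setIntegral_eq_zero_of_odd (by ext u; simp [neg_le, and_comm]) conjKernel_neg

def conjIntegrand (φ : ℝ → ℝ) (x u : ℝ) : ℝ := (φ (x + u) - φ x) * conjKernel u

def conjIntegral (φ : ℝ → ℝ) (x : ℝ) : ℝ :=
  -(1 / π) * ∫ u in Icc (-π) π, conjIntegrand φ x u

lemma conjAt_conjIntegral {φ : ℝ → ℝ} {x : ℝ}
    (hint : IntegrableOn (conjIntegrand φ x) (Icc (-π) π)) :
    ConjAt φ x (conjIntegral φ x) := by
  refine ((tendsto_setIntegral_inter_abs_ge hint).const_mul (-(1 / π))).congr' ?_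
  filter_upwards [self_mem_nhdsWithin] with δ (hδ : 0 < δ)
  set A := Icc (-π) π ∩ {u | δ ≤ |u|}
  have hshift : ∫ t in {t : ℝ | δ ≤ |t - x| ∧ |t - x| ≤ π}, φ t / (2 * tan ((t - x) / 2))
      = ∫ u in A, φ (x + u) * conjKernel u := by
    have hset : (x + ·) ⁻¹' {t : ℝ | δ ≤ |t - x| ∧ |t - x| ≤ π} = A := by
      ext u
      simp only [A, mem_preimage, mem_ofPred_eq, add_sub_cancel_left, mem_inter_iff, mem_Icc,
        ← abs_le]
      tauto
    rw [← (measurePreserving_add_left volume x).setIntegral_preimage_emb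
      (measurableEmbedding_addLeft x), hset]
    congr 1 with u
    rw [add_sub_cancel_left, conjKernel, div_eq_mul_one_div (φ (x + u))]
  have hodd : ∫ u in A, φ (x + u) * conjKernel u = ∫ u in A, conjIntegrand φ x u := by
    have hsplit : ∀ u, φ (x + u) * conjKernel u = conjIntegrand φ x u + φ x * conjKernel u :=
      fun u => by rw [conjIntegrand]; ring
    simp_rw [hsplit]
    rw [integral_add (hint.mono_set inter_subset_left)
      ((integrableOn_conjKernel_inter_abs_ge hδ).const_mul _), integral_const_mul,
      integral_conjKernel_inter_abs_ge, mul_zero, add_zero]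
  rw [hshift, hodd]

lemma abs_mul_conjKernel_le {a c u : ℝ} (hu : |u| ≤ π) (ha : |a| ≤ c) :
    |a * conjKernel u| ≤ c / |u| := by
  rw [abs_mul, div_eq_mul_inv]
  exact mul_le_mul ha (abs_conjKernel_le hu) (abs_nonneg _) ((abs_nonneg a).trans ha)

lemma measurable_conjIntegrand {φ : ℝ → ℝ} (hφ : Continuous φ) (x : ℝ) :
    Measurable (conjIntegrand φ x) :=
  ((hφ.comp (continuous_const_add x)).sub continuous_const).measurable.mul measurable_conjKernel

lemma integrableOn_conjIntegrand_of_locallyLipschitz {φ : ℝ → ℝ} (hφ : LocallyLipschitz φ)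
    (x : ℝ) : IntegrableOn (conjIntegrand φ x) (Icc (-π) π) := by
  obtain ⟨K, hK⟩ := LocallyLipschitzOn.exists_lipschitzOnWith_of_compact
    (isCompact_Icc (a := x - π) (b := x + π)) hφ.locallyLipschitzOn
  refine IntegrableOn.of_bound (by simp)
    (measurable_conjIntegrand hφ.continuous x).aestronglyMeasurable K
    (ae_restrict_of_forall_mem measurableSet_Icc fun u hu => ?_)
  have hlip : |φ (x + u) - φ x| ≤ K * |u| := by
    simpa [Real.dist_eq] using hK.dist_le_mul (x + u)
      ⟨by linarith [hu.1], by linarith [hu.2]⟩ x ⟨by linarith [pi_pos], by linarith [pi_pos]⟩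
  calc ‖conjIntegrand φ x u‖ ≤ K * |u| / |u| := abs_mul_conjKernel_le (abs_le.2 hu) hlip
    _ ≤ K := by rw [mul_div_assoc]; exact mul_le_of_le_one_right K.2 (div_self_le_one _)

lemma integrableOn_modulus_div_abs {ω : ℝ → ℝ} (hω : Continuous ω) (hd : DiniCondition ω)
    (R : ℝ) : IntegrableOn (fun u => ω |u| / |u|) (Icc (-R) R) := by
  obtain ⟨ε, hε, hnear⟩ := hd
  have hfar : IntegrableOn (fun u => ω u / u) (Icc ε R) :=
    (hω.continuousOn.div continuousOn_id fun u hu => (hε.trans_le hu.1).ne').integrableOn_Icc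
  have hpos : IntegrableOn (fun u => ω |u| / |u|) (Icc 0 R) := by
    rw [integrableOn_Icc_iff_integrableOn_Ioc]
    refine ((hnear.union hfar).mono_set fun u hu => ?_).congr_fun
      (fun u hu => by simp only [abs_of_pos hu.1]) measurableSet_Ioc
    rcases lt_or_ge u ε with h | h
    exacts [Or.inl ⟨hu.1, h⟩, Or.inr ⟨h, hu.2⟩]
  have hneg : IntegrableOn (fun u => ω |u| / |u|) (Icc (-R) 0) := by
    rw [← (Measure.measurePreserving_neg volume).integrableOn_comp_preimage
      (MeasurableEquiv.neg ℝ).measurableEmbedding] at hpos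
    simpa [Function.comp_def] using hpos
  refine (hneg.union hpos).mono_set fun u hu => ?_
  rcases le_total u 0 with h | h
  exacts [Or.inl ⟨hu.1, h⟩, Or.inr ⟨h, hu.2⟩]

section Modulus

variable {ω φ : ℝ → ℝ}

lemma norm_conjIntegrand_le (hmod : ∀ a b, |φ a - φ b| ≤ ω |a - b|) (x : ℝ) {u : ℝ}
    (hu : u ∈ Icc (-π) π) : ‖conjIntegrand φ x u‖ ≤ ω |u| / |u| :=
  abs_mul_conjKernel_le (abs_le.2 hu) (by simpa using hmod (x + u) x)

lemma integrableOn_conjIntegrand_of_modulus (hφ : Continuous φ)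
    (hmod : ∀ a b, |φ a - φ b| ≤ ω |a - b|)
    (hbound : IntegrableOn (fun u => ω |u| / |u|) (Icc (-π) π)) (x : ℝ) :
    IntegrableOn (conjIntegrand φ x) (Icc (-π) π) :=
  hbound.mono' (measurable_conjIntegrand hφ x).aestronglyMeasurable
    (ae_restrict_of_forall_mem measurableSet_Icc fun _ hu => norm_conjIntegrand_le hmod x hu)

lemma continuous_conjIntegral (hφ : Continuous φ) (hmod : ∀ a b, |φ a - φ b| ≤ ω |a - b|)
    (hbound : IntegrableOn (fun u => ω |u| / |u|) (Icc (-π) π)) :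
    Continuous (conjIntegral φ) :=
  continuous_const.mul <| continuous_of_dominated
    (fun y => (measurable_conjIntegrand hφ y).aestronglyMeasurable)
    (fun y => ae_restrict_of_forall_mem measurableSet_Icc fun _ hu =>
      norm_conjIntegrand_le hmod y hu)
    hbound (Eventually.of_forall fun u => by unfold conjIntegrand; fun_prop)

lemma hasDerivAt_conjIntegral (hφ : ContDiff ℝ 1 φ)
    (hmod : ∀ a b, |deriv φ a - deriv φ b| ≤ ω |a - b|)
    (hbound : IntegrableOn (fun u => ω |u| / |u|) (Icc (-π) π)) (x : ℝ) :
    HasDerivAt (conjIntegral φ) (conjIntegral (deriv φ) x) x := by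
  have hdiff : Differentiable ℝ φ := hφ.differentiable one_ne_zero
  have hparam : ∀ u y, HasDerivAt (conjIntegrand φ · u) (conjIntegrand (deriv φ) y u) y :=
    fun u y => (((hdiff (y + u)).hasDerivAt.comp_add_const y u).sub
      (hdiff y).hasDerivAt).mul_const _
  refine HasDerivAt.const_mul _ (hasDerivAt_integral_of_dominated_loc_of_deriv_le univ_mem
    (Eventually.of_forall fun y => (measurable_conjIntegrand hφ.continuous y).aestronglyMeasurable)
    (integrableOn_conjIntegrand_of_locallyLipschitz hφ.locallyLipschitz x)
    (measurable_conjIntegrand (hφ.continuous_deriv le_rfl) x).aestronglyMeasurable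
    (ae_restrict_of_forall_mem measurableSet_Icc fun _ hu y _ => norm_conjIntegrand_le hmod y hu)
    hbound (Eventually.of_forall fun u y _ => hparam u y)).2

end Modulus

theorem conj_deriv_comm_general (ω f : ℝ → ℝ) (hω : IsConcaveModulus ω) (hd : DiniCondition ω)
    (hf : ContDiff ℝ 1 f)
    (hmod : ∀ x y : ℝ, |deriv f x - deriv f y| ≤ ω |x - y|) :
    ∃ g h : ℝ → ℝ, ConjFn f g ∧ ConjFn (deriv f) h ∧
      (∀ x : ℝ, HasDerivAt g (h x) x) ∧ Continuous h := by
  have hbound := integrableOn_modulus_div_abs hω.1 hd π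
  have hf' : Continuous (deriv f) := hf.continuous_deriv le_rfl
  exact ⟨conjIntegral f, conjIntegral (deriv f),
    fun x => conjAt_conjIntegral
      (integrableOn_conjIntegrand_of_locallyLipschitz hf.locallyLipschitz x),
    fun x => conjAt_conjIntegral (integrableOn_conjIntegrand_of_modulus hf' hmod hbound x),
    hasDerivAt_conjIntegral hf hmod hbound, continuous_conjIntegral hf' hmod hbound⟩

/-- conjugation commutes with differentiation. -/
theorem conj_deriv_comm (ω f : ℝ → ℝ) (hω : IsConcaveModulus ω) (hd : DiniCondition ω)
    (hp : Function.Periodic f (2 * π)) (hf : ContDiff ℝ 1 f)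
    (hmod : ∀ x y : ℝ, |deriv f x - deriv f y| ≤ ω |x - y|) :
    ∃ g h : ℝ → ℝ, ConjFn f g ∧ ConjFn (deriv f) h ∧
      (∀ x : ℝ, HasDerivAt g (h x) x) ∧ Continuous h :=
  conj_deriv_comm_general ω f hω hd hf hmod
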